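/- arXiv:2103.15646 — 7 statements merged into one kernel-verified Lean document; each statement's English description precedes it below -/
import Mathlib

section
/- Let k be a field complete with respect to a nontrivial non-Archimedean absolute value, and let k^ac be an algebraic closure of k with the unique extension of the absolute value. Then the completion ℂ_k of k^ac is separably closed. -/
/-!
Let `f` be a monic irreducible separable polynomial over `C` and `a` a root of `f` in an algebraic
closure of `C`, normed by the spectral norm. Approximating `f` by a polynomial over the dense
algebraically closed subfield `kac`, continuity of roots produces a root `b ∈ C` of the
approximation that is closer to `a` than any other conjugate of `a`, so `a ∈ C(b) = C` by
Krasner's lemma.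
-/

open Polynomial IntermediateField

theorem Set.Finite.exists_pos_forall_le_dist {X : Type*} [MetricSpace X] {S : Set X}
    (hS : S.Finite) (a : X) : ∃ δ > 0, ∀ x ∈ S, x ≠ a → δ ≤ dist a x := by
  obtain ⟨δ, hδ, hball⟩ :=
    Metric.isOpen_iff.mp (hS.sdiff (t := {a})).isClosed.isOpen_compl a (by simp)
  refine ⟨δ, hδ, fun x hx hxa => not_lt.mp fun hlt => hball ?_ ⟨hx, hxa⟩⟩
  rwa [Metric.mem_ball, dist_comm]

theorem Polynomial.exists_norm_sub_algebraMap_lt_of_aeval_eq_zero {K L F : Type*} [Field K]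
    [NormedField L] [NormedField F] [NormedAlgebra L F] [Algebra K L] [IsAlgClosed K]
    (hd : DenseRange (algebraMap K L)) {f : L[X]} (hf : f.Monic) {a : F} (ha : f.aeval a = 0)
    {δ : ℝ} (hδ : 0 < δ) : ∃ b : L, ‖a - algebraMap L F b‖ < δ := by
  set n := f.natDegree
  have hn : n ≠ 0 := fun h => by simp [hf.natDegree_eq_zero.mp h] at ha
  set M := max ‖a‖ 1
  have hM : 0 < M := lt_max_of_lt_right one_pos
  -- chosen so that the bound `((n + 1) * ε) ^ (1 / n) * M` of continuity of roots is `δ`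
  set ε := (δ / M) ^ n / (n + 1)
  have hε : 0 < ε := by positivity
  obtain ⟨g, hgm, hdeg, hcoeff⟩ :=
    exists_monic_and_natDegree_eq_and_norm_map_algebraMap_coeff_sub_lt hd hf hε
  have hgs : (g.map (algebraMap K L)).Splits := (IsAlgClosed.splits g).map _
  obtain ⟨b, hb, hab⟩ := exists_aroots_norm_sub_lt_of_norm_coeff_sub_lt hε ha hf (hgm.map _)
    (by rw [natDegree_map, hdeg]) hcoeff
    (hgs.map (algebraMap L F))
  rw [aroots_def, hgs.roots_map, Multiset.mem_map] at hb
  obtain ⟨b, -, rfl⟩ := hb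
  refine ⟨b, hab.trans_eq ?_⟩
  rw [show ((n : ℝ) + 1) * ε = (δ / M) ^ n by simp only [ε]; field_simp,
    Real.pow_rpow_inv_natCast (by positivity) hn, div_mul_cancel₀ _ hM.ne']

theorem IsSepClosed.of_denseRange {K L : Type*} [Field K] [NontriviallyNormedField L]
    [CompleteSpace L] [IsUltrametricDist L] [Algebra K L] [IsAlgClosed K]
    (hd : DenseRange (algebraMap K L)) : IsSepClosed L := by
  refine IsSepClosed.of_exists_root L fun f hfm hfirr hfsep => ?_
  let F := AlgebraicClosure L
  let : NormedField F := spectralNorm.normedField L F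
  let : NormedAlgebra L F := spectralNorm.normedAlgebra L F
  obtain ⟨a, ha⟩ := IsAlgClosed.exists_aeval_eq_zero F f (degree_pos_of_irreducible hfirr).ne'
  have hmin : minpoly L a = f := (minpoly.eq_of_irreducible_of_monic hfirr ha hfm).symm
  obtain ⟨δ, hδ, hsep⟩ := (f.rootSet_finite F).exists_pos_forall_le_dist a
  obtain ⟨b, hab⟩ := exists_norm_sub_algebraMap_lt_of_aeval_eq_zero hd hfm ha hδ
  have haL : a ∈ L⟮algebraMap L F b⟯ := by
    refine IsKrasner.krasner (hmin ▸ hfsep) (IsAlgClosed.splits _) isIntegral_algebraMap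
      fun a' hconj hne => hab.trans_le ?_
    rw [← dist_eq_norm]
    refine hsep a' ?_ (Ne.symm hne)
    rwa [← hmin, ← isConjRoot_iff_mem_minpoly_rootSet (Algebra.IsIntegral.isIntegral a)]
  rw [adjoin_simple_eq_bot_iff.mpr (IntermediateField.algebraMap_mem _ b), mem_bot] at haL
  obtain ⟨c, rfl⟩ := haL
  exact ⟨c, (algebraMap L F).injective (by simpa using ha)⟩

theorem completion_of_algebraic_closure_isSepClosed_general
    {k kac C : Type*} [Field k] [Field kac] [Field C]
    [Algebra k kac] [IsAlgClosure k kac]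
    (ι : kac →+* C) (v : AbsoluteValue C ℝ)
    -- the absolute value is non-Archimedean
    (hna : ∀ x y : C, v (x + y) ≤ max (v x) (v y))
    -- the absolute value is nontrivial on `k`
    (hnontriv : ∃ a : k, a ≠ 0 ∧ v (ι (algebraMap k kac a)) ≠ 1)
    -- `kac` is dense in `C`
    (hdense : ∀ (y : C) (ε : ℝ), 0 < ε → ∃ x : kac, v (y - ι x) < ε)
    -- `C` is complete
    (hCcomplete : ∀ f : ℕ → C,
      (∀ ε : ℝ, 0 < ε → ∃ N : ℕ, ∀ m ≥ N, ∀ n ≥ N, v (f m - f n) < ε) →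
      ∃ l : C, ∀ ε : ℝ, 0 < ε → ∃ N : ℕ, ∀ n ≥ N, v (f n - l) < ε) :
    IsSepClosed C := by
  let : NormedField C := v.toNormedField
  obtain ⟨a, ha, hva⟩ := hnontriv
  let : NontriviallyNormedField C :=
    .ofNormNeOne ⟨ι (algebraMap k kac a), by simpa using ha, hva⟩
  let : Algebra kac C := ι.toAlgebra
  have hdist (x y : C) : dist x y = v (x - y) := dist_eq_norm x y
  have : IsUltrametricDist C :=
    IsUltrametricDist.isUltrametricDist_of_forall_norm_add_le_max_norm hna
  have : CompleteSpace C := by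
    refine Metric.complete_of_cauchySeq_tendsto fun u hu => ?_
    obtain ⟨l, hl⟩ := hCcomplete u (by simpa only [hdist] using Metric.cauchySeq_iff.mp hu)
    exact ⟨l, Metric.tendsto_atTop.mpr (by simpa only [hdist] using hl)⟩
  have : IsAlgClosed kac := IsAlgClosure.isAlgClosed k
  exact IsSepClosed.of_denseRange (K := kac)
    (Metric.denseRange_iff.mpr (by simpa only [hdist, RingHom.algebraMap_toAlgebra] using hdense))

/-- Let `k` be a field complete with respect to a nontrivial non-Archimedean
absolute value, `kac` an algebraic closure of `k` with the (unique) extension of the absolute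
value, and `C` the completion `ℂ_k` of `kac` (a complete valued field in which `kac` embeds
isometrically-densely).  Then `C` is separably closed. -/
theorem completion_of_algebraic_closure_isSepClosed
    {k kac C : Type*} [Field k] [Field kac] [Field C]
    [Algebra k kac] [IsAlgClosure k kac]
    (ι : kac →+* C) (v : AbsoluteValue C ℝ)
    -- the absolute value is non-Archimedean
    (hna : ∀ x y : C, v (x + y) ≤ max (v x) (v y))
    -- the absolute value is nontrivial on `k`
    (hnontriv : ∃ a : k, a ≠ 0 ∧ v (ι (algebraMap k kac a)) ≠ 1)
    -- `k` is complete
    (hkcomplete : ∀ f : ℕ → k,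
      (∀ ε : ℝ, 0 < ε → ∃ N : ℕ, ∀ m ≥ N, ∀ n ≥ N,
        v (ι (algebraMap k kac (f m - f n))) < ε) →
      ∃ l : k, ∀ ε : ℝ, 0 < ε → ∃ N : ℕ, ∀ n ≥ N,
        v (ι (algebraMap k kac (f n - l))) < ε)
    -- `kac` is dense in `C`
    (hdense : ∀ (y : C) (ε : ℝ), 0 < ε → ∃ x : kac, v (y - ι x) < ε)
    -- `C` is complete
    (hCcomplete : ∀ f : ℕ → C,
      (∀ ε : ℝ, 0 < ε → ∃ N : ℕ, ∀ m ≥ N, ∀ n ≥ N, v (f m - f n) < ε) →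
      ∃ l : C, ∀ ε : ℝ, 0 < ε → ∃ N : ℕ, ∀ n ≥ N, v (f n - l) < ε) :
    IsSepClosed C :=
  completion_of_algebraic_closure_isSepClosed_general ι v hna hnontriv hdense hCcomplete
end

section
/- Let k be a field complete with respect to an absolute value. The completion ℂ_k of an algebraic closure of k is algebraically closed. -/
/-!
Let `f` be monic of degree `n` over a complete field `L` with a dense algebraically closed
subfield. Approximate `f` coefficientwise by monic polynomials `G m` over the subfield; they split
in `L`. By continuity of roots, every root of `G m` is within `c · 2⁻ᵐ` of a root of `G (m + 1)`
(all these roots obey one Cauchy bound), so choosing roots successively gives a Cauchy sequence.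
Its limit is a root of `f`, because `f - G m → 0` uniformly on bounded sets.
-/

open Filter Topology NNReal

theorem exists_seq_forall_mem_tendsto_of_forall_exists_dist_le_geometric {α : Type*}
    [PseudoMetricSpace α] [CompleteSpace α] {s : ℕ → Set α} (h0 : (s 0).Nonempty) {C r : ℝ}
    (hr : r < 1) (h : ∀ m, ∀ a ∈ s m, ∃ b ∈ s (m + 1), dist a b ≤ C * r ^ m) :
    ∃ x : ℕ → α, (∀ m, x m ∈ s m) ∧ ∃ l, Tendsto x atTop (𝓝 l) := by
  choose next hnext hdist using h
  let x : ∀ m, s m := fun m => Nat.rec ⟨h0.some, h0.some_mem⟩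
    (fun m a => ⟨next m a a.2, hnext m a a.2⟩) m
  refine ⟨fun m => (x m).1, fun m => (x m).2, cauchySeq_tendsto_of_complete ?_⟩
  exact cauchySeq_of_le_geometric r C hr fun m => hdist m (x m).1 (x m).2

namespace Polynomial

section NormedDivisionRing

variable {K : Type*} [NormedDivisionRing K]

theorem norm_eval_le_of_norm_coeff_le {p : K[X]} {n : ℕ} (hp : p.natDegree ≤ n) {ε R : ℝ}
    (hε : ∀ i, ‖p.coeff i‖ ≤ ε) (hR : 1 ≤ R) {x : K} (hx : ‖x‖ ≤ R) :
    ‖p.eval x‖ ≤ (n + 1) * ε * R ^ n := by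
  have hε0 : 0 ≤ ε := (norm_nonneg _).trans (hε 0)
  calc ‖p.eval x‖ = ‖∑ i ∈ Finset.range (n + 1), p.coeff i * x ^ i‖ := by
        rw [eval_eq_sum_range' (Nat.lt_succ_of_le hp)]
    _ ≤ ∑ i ∈ Finset.range (n + 1), ‖p.coeff i‖ * ‖x‖ ^ i :=
        norm_sum_le_of_le _ fun i _ => by rw [norm_mul, norm_pow]
    _ ≤ ∑ i ∈ Finset.range (n + 1), ε * R ^ n := by
        refine Finset.sum_le_sum fun i hi => mul_le_mul (hε i) ?_ (by positivity) hε0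
        exact (pow_le_pow_left₀ (norm_nonneg x) hx i).trans
          (pow_le_pow_right₀ hR (Nat.lt_succ_iff.1 (Finset.mem_range.1 hi)))
    _ = (n + 1) * ε * R ^ n := by simp [mul_assoc]

theorem IsRoot.norm_lt_cauchyBound_add {f g : K[X]} (hf : f.Monic) (hg : g.Monic)
    (hdeg : g.natDegree = f.natDegree) {δ : ℝ} (h : ∀ i, ‖g.coeff i - f.coeff i‖ ≤ δ) {a : K}
    (ha : g.IsRoot a) :
    ‖a‖ < cauchyBound f + δ := by
  lift δ to ℝ≥0 using (norm_nonneg _).trans (h 0)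
  suffices ‖a‖₊ < cauchyBound f + δ by exact_mod_cast this
  refine (ha.norm_lt_cauchyBound hg.ne_zero).trans_le ?_
  simp only [cauchyBound, hf.leadingCoeff, hg.leadingCoeff, nnnorm_one, div_one, hdeg]
  rw [add_right_comm]
  gcongr
  refine Finset.sup_le fun i hi => ?_
  calc ‖g.coeff i‖₊ ≤ ‖f.coeff i‖₊ + ‖g.coeff i - f.coeff i‖₊ := nnnorm_le_insert' _ _
    _ ≤ _ := add_le_add (Finset.le_sup (f := fun i => ‖f.coeff i‖₊) hi)
      (by rw [← NNReal.coe_le_coe, coe_nnnorm]; exact h i)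

end NormedDivisionRing

variable {L : Type*} [NormedField L]

theorem tendsto_eval_nhds_zero_of_norm_coeff_sub_le {ι : Type*} {l : Filter ι} {f : L[X]}
    {G : ι → L[X]} (hdeg : ∀ m, (G m).natDegree ≤ f.natDegree) {ε : ι → ℝ}
    (hG : ∀ m i, ‖(G m).coeff i - f.coeff i‖ ≤ ε m) (hε : Tendsto ε l (𝓝 0)) {x : ι → L}
    (hx : ∀ m, (G m).eval (x m) = 0) {R : ℝ} (hR : 1 ≤ R) (hxR : ∀ m, ‖x m‖ ≤ R) :
    Tendsto (fun m => f.eval (x m)) l (𝓝 0) := by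
  have hfx (m : ι) : ‖f.eval (x m)‖ ≤ (f.natDegree + 1) * ε m * R ^ f.natDegree := by
    have h := norm_eval_le_of_norm_coeff_le (p := f - G m)
      ((natDegree_sub_le_iff_left (hdeg m)).2 le_rfl)
      (fun i => by rw [coeff_sub, norm_sub_rev]; exact hG m i) hR (hxR m)
    rwa [eval_sub, hx m, sub_zero] at h
  exact squeeze_zero_norm hfx (by simpa using (hε.const_mul _).mul_const _)

theorem exists_mem_roots_dist_le_of_norm_coeff_sub_lt {f g h : L[X]} (hg : g.Monic)
    (hh : h.Monic) (hgdeg : g.natDegree = f.natDegree) (hhdeg : h.natDegree = f.natDegree)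
    (hs : h.Splits) {ε : ℝ} (hgf : ∀ i, ‖g.coeff i - f.coeff i‖ < ε)
    (hhf : ∀ i, ‖h.coeff i - f.coeff i‖ < ε) {a : L} (ha : g.eval a = 0) {R : ℝ} (hR : 1 ≤ R)
    (haR : ‖a‖ ≤ R) :
    ∃ b ∈ h.roots, dist a b ≤ ((f.natDegree + 1) * (2 * ε)) ^ (f.natDegree⁻¹ : ℝ) * R := by
  have hhg (i : ℕ) : ‖h.coeff i - g.coeff i‖ < 2 * ε :=
    calc ‖h.coeff i - g.coeff i‖ ≤ ‖h.coeff i - f.coeff i‖ + ‖f.coeff i - g.coeff i‖ :=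
          norm_sub_le_norm_sub_add_norm_sub ..
      _ < 2 * ε := by rw [norm_sub_rev (f.coeff i)]; linarith [hgf i, hhf i]
  have hε : 0 < 2 * ε := (norm_nonneg _).trans_lt (hhg 0)
  obtain ⟨b, hb, hab⟩ := exists_roots_norm_sub_lt_of_norm_coeff_sub_lt hε ha hg hh
    (hhdeg.trans hgdeg.symm) hhg hs
  rw [hgdeg] at hab
  refine ⟨b, hb, (dist_eq_norm a b).trans_le (hab.le.trans ?_)⟩
  gcongr
  exact max_le haR hR

theorem exists_monic_splits_natDegree_eq_norm_coeff_sub_lt {A : Type*} [Field A]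
    [IsAlgClosed A] [Algebra A L] (hd : DenseRange (algebraMap A L)) {f : L[X]} (hf : f.Monic)
    {ε : ℝ} (hε : 0 < ε) :
    ∃ g : L[X], g.Monic ∧ g.Splits ∧ g.natDegree = f.natDegree ∧
      ∀ i, ‖g.coeff i - f.coeff i‖ < ε := by
  obtain ⟨g, hgm, hdeg, hc⟩ :=
    exists_monic_and_natDegree_eq_and_norm_map_algebraMap_coeff_sub_lt hd hf hε
  exact ⟨g.map _, hgm.map _, (IsAlgClosed.splits g).map _, by rw [natDegree_map, hdeg], hc⟩

theorem exists_eval_eq_zero_of_forall_exists_splits [CompleteSpace L] {f : L[X]} (hf : f.Monic)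
    (hn : f.natDegree ≠ 0)
    (happrox : ∀ ε > 0, ∃ g : L[X], g.Monic ∧ g.Splits ∧ g.natDegree = f.natDegree ∧
      ∀ i, ‖g.coeff i - f.coeff i‖ < ε) :
    ∃ x, f.eval x = 0 := by
  set n := f.natDegree
  -- chosen so that `((n + 1) * (2 * ε m)) ^ (1 / n) = 2⁻ᵐ`
  set ε : ℕ → ℝ := fun m => ((1 / 2 : ℝ) ^ m) ^ n / (2 * (n + 1)) with hε_def
  have hε_pos (m : ℕ) : 0 < ε m := by positivity
  have hε_anti : Antitone ε := antitone_nat_of_succ_le fun m => by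
    simp only [hε_def]
    gcongr ?_ ^ n / _
    exact pow_le_pow_of_le_one (by norm_num) (by norm_num) (Nat.le_succ m)
  have hε_lim : Tendsto ε atTop (𝓝 0) := by
    convert ((tendsto_pow_atTop_nhds_zero_of_lt_one (by norm_num)
      (by norm_num : (1 / 2 : ℝ) < 1)).pow n).div_const (2 * ((n : ℝ) + 1)) using 2
    simp [zero_pow hn]
  choose G hGm hGs hGdeg hGc using fun m => happrox (ε m) (hε_pos m)
  set R : ℝ := cauchyBound f + ε 0
  have hR : 1 ≤ R :=
    le_add_of_le_of_nonneg (by exact_mod_cast one_le_cauchyBound f) (hε_pos 0).le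
  have hroot_le (m : ℕ) (a : L) (ha : a ∈ (G m).roots) : ‖a‖ ≤ R :=
    ((isRoot_of_mem_roots ha).norm_lt_cauchyBound_add hf (hGm m) (hGdeg m) fun i =>
      (hGc m i).le.trans (hε_anti (Nat.zero_le m))).le
  have hstep (m : ℕ) (a : L) (ha : a ∈ (G m).roots) :
      ∃ b ∈ (G (m + 1)).roots, dist a b ≤ R * (1 / 2) ^ m := by
    obtain ⟨b, hb, hab⟩ : ∃ b ∈ (G (m + 1)).roots,
        dist a b ≤ ((n + 1) * (2 * ε m)) ^ (n⁻¹ : ℝ) * R :=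
      exists_mem_roots_dist_le_of_norm_coeff_sub_lt (hGm m) (hGm (m + 1)) (hGdeg m)
        (hGdeg (m + 1)) (hGs (m + 1)) (hGc m)
        (fun i => (hGc (m + 1) i).trans_le (hε_anti (Nat.le_succ m)))
        (isRoot_of_mem_roots ha) hR (hroot_le m a ha)
    have h2ε : ((n : ℝ) + 1) * (2 * ε m) = ((1 / 2 : ℝ) ^ m) ^ n := by
      simp only [hε_def]; field_simp
    refine ⟨b, hb, hab.trans_eq ?_⟩
    rw [h2ε, Real.pow_rpow_inv_natCast (by positivity) hn, mul_comm]
  obtain ⟨x₀, hx₀⟩ :=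
    Multiset.exists_mem_of_ne_zero ((hGs 0).roots_ne_zero ((hGdeg 0).trans_ne hn))
  obtain ⟨x, hx, l, hl⟩ := exists_seq_forall_mem_tendsto_of_forall_exists_dist_le_geometric
    (s := fun m => {a | a ∈ (G m).roots}) ⟨x₀, hx₀⟩ (by norm_num) hstep
  refine ⟨l, tendsto_nhds_unique ((f.continuous.tendsto l).comp hl) ?_⟩
  exact tendsto_eval_nhds_zero_of_norm_coeff_sub_le (fun m => (hGdeg m).le)
    (fun m i => (hGc m i).le) hε_lim (fun m => isRoot_of_mem_roots (hx m)) hR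
    (fun m => hroot_le m _ (hx m))

end Polynomial

theorem IsAlgClosed.of_denseRange_of_completeSpace {A L : Type*} [Field A] [IsAlgClosed A]
    [NormedField L] [CompleteSpace L] [Algebra A L] (hd : DenseRange (algebraMap A L)) :
    IsAlgClosed L :=
  IsAlgClosed.of_exists_root _ fun _f hf hirr =>
    Polynomial.exists_eval_eq_zero_of_forall_exists_splits hf hirr.natDegree_pos.ne' fun _ε hε =>
      Polynomial.exists_monic_splits_natDegree_eq_norm_coeff_sub_lt hd hf hε

theorem completion_of_algebraic_closure_isAlgClosed_general
    {k kac C : Type*} [Field k] [Field kac] [Field C]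
    [Algebra k kac] [IsAlgClosure k kac]
    (ι : kac →+* C) (v : AbsoluteValue C ℝ)
    -- `kac` is dense in `C`
    (hdense : ∀ (y : C) (ε : ℝ), 0 < ε → ∃ x : kac, v (y - ι x) < ε)
    -- `C` is complete
    (hCcomplete : ∀ f : ℕ → C,
      (∀ ε : ℝ, 0 < ε → ∃ N : ℕ, ∀ m ≥ N, ∀ n ≥ N, v (f m - f n) < ε) →
      ∃ l : C, ∀ ε : ℝ, 0 < ε → ∃ N : ℕ, ∀ n ≥ N, v (f n - l) < ε) :
    IsAlgClosed C := by
  let : NormedField C := v.toNormedField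
  let : Algebra kac C := ι.toAlgebra
  have : IsAlgClosed kac := IsAlgClosure.isAlgClosed k
  have hdist (x y : C) : dist x y = v (x - y) := by rw [dist_eq_norm]; rfl
  have : CompleteSpace C := Metric.complete_of_cauchySeq_tendsto fun u hu =>
    (hCcomplete u (by simpa only [hdist] using Metric.cauchySeq_iff.1 hu)).imp fun _l hl =>
      Metric.tendsto_atTop.2 (by simpa only [hdist] using hl)
  exact IsAlgClosed.of_denseRange_of_completeSpace (A := kac) <| Metric.denseRange_iff.2
    fun y ε hε => by simpa only [hdist, RingHom.algebraMap_toAlgebra] using hdense y ε hε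

/-- Let `k` be a field complete with respect to an absolute value.  The
completion `C = ℂ_k` of an algebraic closure `kac` of `k` (with the unique extension of the
absolute value) is algebraically closed. -/
theorem completion_of_algebraic_closure_isAlgClosed
    {k kac C : Type*} [Field k] [Field kac] [Field C]
    [Algebra k kac] [IsAlgClosure k kac]
    (ι : kac →+* C) (v : AbsoluteValue C ℝ)
    -- `k` is complete
    (hkcomplete : ∀ f : ℕ → k,
      (∀ ε : ℝ, 0 < ε → ∃ N : ℕ, ∀ m ≥ N, ∀ n ≥ N,
        v (ι (algebraMap k kac (f m - f n))) < ε) →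
      ∃ l : k, ∀ ε : ℝ, 0 < ε → ∃ N : ℕ, ∀ n ≥ N,
        v (ι (algebraMap k kac (f n - l))) < ε)
    -- `kac` is dense in `C`
    (hdense : ∀ (y : C) (ε : ℝ), 0 < ε → ∃ x : kac, v (y - ι x) < ε)
    -- `C` is complete
    (hCcomplete : ∀ f : ℕ → C,
      (∀ ε : ℝ, 0 < ε → ∃ N : ℕ, ∀ m ≥ N, ∀ n ≥ N, v (f m - f n) < ε) →
      ∃ l : C, ∀ ε : ℝ, 0 < ε → ∃ N : ℕ, ∀ n ≥ N, v (f n - l) < ε) :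
    IsAlgClosed C :=
  completion_of_algebraic_closure_isAlgClosed_general (k := k) ι v hdense hCcomplete
end

section
/- Let (E, ‖·‖) be a finite-dimensional ultrametrically normed vector space over a complete non-Archimedean algebraically closed valued field k with nontrivial valuation. For any α ∈ (0,1), there exists a norm ‖·‖_α on E admitting an orthonormal basis such that for all x ∈ E, ‖x‖ ≤ ‖x‖_α ≤ α^{-2}‖x‖; in particular the distance d(‖·‖_α, ‖·‖) := sup_{x≠0} |ln‖x‖_α - ln‖x‖| is at most -2 ln α. -/
/-!
By Riesz's lemma, a proper finite-dimensional subspace `F` of an ultrametric normed space admits,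
for every `γ < 1`, a vector `e` with `γ‖e‖ ≤ ‖e - y‖` for all `y ∈ F`. Adjoining such vectors one
at a time yields, for every `α ∈ (0,1)`, an `α`-orthogonal basis. Over an algebraically closed
field the value group is dense, so the basis vectors can be rescaled to norms in `(α, 1)`; the
sup norm of the coordinates is then squeezed between `‖x‖` and `α⁻² ‖x‖`.
-/

open Module Submodule Set

section AlmostOrthogonal

variable (k : Type*) {E : Type*} [NontriviallyNormedField k] [NormedAddCommGroup E]
  [NormedSpace k E]

/-- The paper's `β`-orthogonality; the upper bound `‖∑ cᵢ vᵢ‖ ≤ max ‖cᵢ‖ ‖vᵢ‖` holds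
automatically in an ultrametric space. -/
def AlmostOrthogonal {ι : Type*} [Fintype ι] (β : ℝ) (v : ι → E) : Prop :=
  ∀ (c : ι → k) (i : ι), β * (‖c i‖ * ‖v i‖) ≤ ‖∑ j, c j • v j‖

variable {k} {ι : Type*} [Fintype ι] {β : ℝ} {v : ι → E}

theorem AlmostOrthogonal.linearIndependent (h : AlmostOrthogonal k β v) (hβ : 0 < β)
    (hv : ∀ i, v i ≠ 0) : LinearIndependent k v := by
  refine Fintype.linearIndependent_iff.2 fun c hc i => ?_
  by_contra hci
  have := h c i
  rw [hc, norm_zero] at this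
  have := mul_pos hβ (mul_pos (norm_pos_iff.2 hci) (norm_pos_iff.2 (hv i)))
  linarith

theorem AlmostOrthogonal.smul (h : AlmostOrthogonal k β v) (s : ι → k) :
    AlmostOrthogonal k β fun i => s i • v i := by
  intro c i
  simpa only [smul_smul, norm_mul, norm_smul, mul_assoc] using h (fun j => c j * s j) i

theorem mul_norm_smul_le_norm_smul_add {H : Submodule k E} {e : E} {γ : ℝ}
    (he : ∀ y ∈ H, γ * ‖e‖ ≤ ‖e - y‖) (a : k) {y : E} (hy : y ∈ H) :
    γ * ‖a • e‖ ≤ ‖a • e + y‖ := by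
  rcases eq_or_ne a 0 with rfl | ha
  · simp
  · have : a • e + y = a • (e - -(a⁻¹ • y)) := by
      rw [sub_neg_eq_add, smul_add, smul_smul, mul_inv_cancel₀ ha, one_smul]
    rw [this, norm_smul, norm_smul, mul_left_comm]
    exact mul_le_mul_of_nonneg_left (he _ (H.neg_mem (H.smul_mem _ hy))) (norm_nonneg a)

theorem AlmostOrthogonal.snoc [IsUltrametricDist E] {n : ℕ} {v : Fin n → E} {e : E} {γ : ℝ}
    (hv : AlmostOrthogonal k β v) (hβ : β ≤ 1) (hγ0 : 0 ≤ γ) (hγ1 : γ ≤ 1)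
    (he : ∀ y ∈ span k (range v), γ * ‖e‖ ≤ ‖e - y‖) :
    AlmostOrthogonal k (β * γ) (Fin.snoc v e : Fin (n + 1) → E) := by
  intro c i
  set a := c (Fin.last n)
  set y := ∑ j : Fin n, c j.castSucc • v j
  have hy : y ∈ span k (range v) := sum_mem fun j _ => smul_mem _ _ (subset_span ⟨j, rfl⟩)
  have hsum : ∑ j, c j • (Fin.snoc v e : Fin (n + 1) → E) j = a • e + y := by
    simp [Fin.sum_univ_castSucc, y, a, add_comm]
  rw [hsum]
  have hlast : γ * ‖a • e‖ ≤ ‖a • e + y‖ := mul_norm_smul_le_norm_smul_add he a hy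
  have hy_le : γ * ‖y‖ ≤ ‖a • e + y‖ := by
    calc γ * ‖y‖ ≤ γ * max ‖a • e + y‖ ‖a • e‖ := by
          gcongr; simpa using IsUltrametricDist.norm_add_le_max (a • e + y) (-(a • e))
      _ = max (γ * ‖a • e + y‖) (γ * ‖a • e‖) := mul_max_of_nonneg _ _ hγ0
      _ ≤ ‖a • e + y‖ := max_le (mul_le_of_le_one_left (norm_nonneg _) hγ1) hlast
  refine Fin.lastCases ?_ (fun j => ?_) i
  · rw [Fin.snoc_last, ← norm_smul]
    calc β * γ * ‖a • e‖ ≤ γ * ‖a • e‖ := by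
          rw [mul_assoc]; exact mul_le_of_le_one_left (by positivity) hβ
      _ ≤ _ := hlast
  · rw [Fin.snoc_castSucc]
    calc β * γ * (‖c j.castSucc‖ * ‖v j‖) = γ * (β * (‖c j.castSucc‖ * ‖v j‖)) := by ring
      _ ≤ γ * ‖y‖ := by gcongr; exact hv (fun j => c j.castSucc) j
      _ ≤ _ := hy_le

theorem exists_almostOrthogonal_fin [CompleteSpace k] [IsUltrametricDist E]
    [FiniteDimensional k E] (n : ℕ) (hn : n ≤ finrank k E) (hβ0 : 0 < β) (hβ1 : β < 1) :
    ∃ v : Fin n → E, (∀ i, v i ≠ 0) ∧ AlmostOrthogonal k β v := by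
  -- Requiring `√β` of both the shorter family and Riesz's lemma makes the constants multiply
  -- to exactly `β`, independently of `n`.
  induction n generalizing β with
  | zero => exact ⟨Fin.elim0, fun i => i.elim0, fun _ i => i.elim0⟩
  | succ n ih =>
    have hγ0 : 0 < √β := Real.sqrt_pos.2 hβ0
    have hγ1 : √β < 1 := (Real.sqrt_lt' one_pos).2 (by rwa [one_pow])
    obtain ⟨v, hv0, hv⟩ := ih (by omega) hγ0 hγ1
    have hproper : ∃ x, x ∉ span k (range v) := by
      by_contra! h
      have : finrank k (span k (range v)) ≤ n :=
        (finrank_range_le_card (R := k) v).trans_eq (Fintype.card_fin n)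
      rw [eq_top_iff'.2 h, finrank_top] at this
      omega
    obtain ⟨e, heH, he⟩ := riesz_lemma (closed_of_finiteDimensional _) hproper hγ1
    have he0 : e ≠ 0 := fun h => heH (h ▸ zero_mem _)
    refine ⟨Fin.snoc v e, Fin.lastCases (by simpa using he0) (by simpa using hv0), ?_⟩
    simpa [Real.mul_self_sqrt hβ0.le] using
      hv.snoc (Real.sqrt_le_one.2 hβ1.le) hγ0.le hγ1.le he

theorem norm_le_iSup_norm_repr [IsUltrametricDist E] (b : Basis ι k E) (hb : ∀ i, ‖b i‖ ≤ 1)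
    (x : E) : ‖x‖ ≤ ⨆ i, ‖b.repr x i‖ := by
  conv_lhs => rw [← b.sum_repr x]
  refine IsUltrametricDist.norm_sum_le_of_forall_le_of_nonneg
    (Real.iSup_nonneg fun _ => norm_nonneg _) fun i _ => ?_
  rw [norm_smul]
  exact (mul_le_of_le_one_right (norm_nonneg _) (hb i)).trans
    (le_ciSup (f := fun j => ‖b.repr x j‖) (Finite.bddAbove_range _) i)

theorem AlmostOrthogonal.iSup_norm_repr_le {b : Basis ι k E} (h : AlmostOrthogonal k β b)
    (hβ : 0 < β) (hb : ∀ i, β ≤ ‖b i‖) (x : E) : ⨆ i, ‖b.repr x i‖ ≤ β⁻¹ ^ 2 * ‖x‖ := by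
  refine Real.iSup_le (fun i => ?_) (by positivity)
  have hx := h (b.repr x) i
  rw [b.sum_repr] at hx
  rw [inv_pow, inv_mul_eq_div, le_div_iff₀ (by positivity)]
  calc ‖b.repr x i‖ * β ^ 2 = β * (‖b.repr x i‖ * β) := by ring
    _ ≤ β * (‖b.repr x i‖ * ‖b i‖) := by gcongr; exact hb i
    _ ≤ ‖x‖ := hx

end AlmostOrthogonal

section AlgClosed

variable {k : Type*} [NontriviallyNormedField k] [IsAlgClosed k]

theorem exists_norm_mem_Ioo_one {ρ : ℝ} (hρ : ρ < 1) : ∃ r : k, ρ < ‖r‖ ∧ ‖r‖ < 1 := by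
  obtain ⟨t, ht0, ht1⟩ := NormedField.exists_norm_lt_one k
  obtain ⟨m, hm⟩ := exists_pow_lt_of_lt_one ht0 hρ
  have hm0 : m ≠ 0 := by rintro rfl; rw [pow_zero] at hm; linarith
  obtain ⟨r, hr⟩ := IsAlgClosed.exists_pow_nat_eq t (Nat.pos_of_ne_zero hm0)
  have hrt : ‖r‖ ^ m = ‖t‖ := by rw [← norm_pow, hr]
  exact ⟨r, lt_of_pow_lt_pow_left₀ m (norm_nonneg r) (hrt ▸ hm),
    (pow_lt_one_iff_of_nonneg (norm_nonneg r) hm0).1 (hrt ▸ ht1)⟩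

theorem exists_norm_mem_Ioo {u v : ℝ} (hu : 0 < u) (huv : u < v) :
    ∃ c : k, u < ‖c‖ ∧ ‖c‖ < v := by
  have hv : 0 < v := hu.trans huv
  obtain ⟨r, hr, hr1⟩ := exists_norm_mem_Ioo_one (k := k) ((div_lt_one hv).2 huv)
  have hr0 : 0 < ‖r‖ := (div_pos hu hv).trans hr
  obtain ⟨n, hn, hn'⟩ := exists_mem_Ioc_zpow hv ((one_lt_inv₀ hr0).2 hr1)
  refine ⟨r⁻¹ ^ n, ?_, ?_⟩ <;> rw [norm_zpow, norm_inv]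
  · rw [zpow_add_one₀ (inv_ne_zero hr0.ne')] at hn'
    rw [div_lt_iff₀ hv] at hr
    calc u < ‖r‖ * v := hr
      _ ≤ ‖r‖ * (‖r‖⁻¹ ^ n * ‖r‖⁻¹) := by gcongr
      _ = ‖r‖⁻¹ ^ n := by field_simp
  · exact hn

end AlgClosed

section Approximation

variable {k E : Type*} [NontriviallyNormedField k] [CompleteSpace k] [IsAlgClosed k]
  [NormedAddCommGroup E] [NormedSpace k E] [IsUltrametricDist E] [FiniteDimensional k E]
  {α : ℝ}

theorem exists_almostOrthogonal_basis_norm_mem_Ioo (hα0 : 0 < α) (hα1 : α < 1) :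
    ∃ b : Basis (Fin (finrank k E)) k E,
      AlmostOrthogonal k α b ∧ ∀ i, α < ‖b i‖ ∧ ‖b i‖ < 1 := by
  obtain ⟨v, hv0, hv⟩ := exists_almostOrthogonal_fin (k := k) (finrank k E) le_rfl hα0 hα1
  have hvpos i : 0 < ‖v i‖ := norm_pos_iff.2 (hv0 i)
  choose s hs using fun i => exists_norm_mem_Ioo (k := k) (div_pos hα0 (hvpos i))
    (div_lt_div_of_pos_right hα1 (hvpos i))
  have hsv i : α < ‖s i • v i‖ ∧ ‖s i • v i‖ < 1 := by
    rw [norm_smul, ← div_lt_iff₀ (hvpos i), ← lt_div_iff₀ (hvpos i)]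
    exact hs i
  have hsv0 i : s i • v i ≠ 0 := norm_pos_iff.1 (hα0.trans (hsv i).1)
  have hli := (hv.smul s).linearIndependent hα0 hsv0
  refine ⟨basisOfLinearIndependentOfCardEqFinrank' _ hli (Fintype.card_fin _), ?_, ?_⟩ <;>
    simp only [coe_basisOfLinearIndependentOfCardEqFinrank']
  exacts [hv.smul s, hsv]

theorem exists_basis_norm_le_iSup_norm_repr_le (hα0 : 0 < α) (hα1 : α < 1) :
    ∃ b : Basis (Fin (finrank k E)) k E,
      ∀ x, ‖x‖ ≤ ⨆ i, ‖b.repr x i‖ ∧ ⨆ i, ‖b.repr x i‖ ≤ α⁻¹ ^ 2 * ‖x‖ := by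
  obtain ⟨b, hb, hbnorm⟩ :=
    exists_almostOrthogonal_basis_norm_mem_Ioo (k := k) (E := E) hα0 hα1
  exact ⟨b, fun x => ⟨norm_le_iSup_norm_repr b (fun i => (hbnorm i).2.le) x,
    hb.iSup_norm_repr_le hα0 (fun i => (hbnorm i).1.le) x⟩⟩

end Approximation

theorem abs_log_sub_log_le_log {a b C : ℝ} (ha : 0 < a) (hab : a ≤ b) (hbC : b ≤ C * a) :
    |Real.log b - Real.log a| ≤ Real.log C := by
  have hC : C ≠ 0 := left_ne_zero_of_mul ((ha.trans_le hab).trans_le hbC).ne'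
  rw [abs_of_nonneg (sub_nonneg.2 (Real.log_le_log ha hab)), sub_le_iff_le_add,
    ← Real.log_mul hC ha.ne']
  exact Real.log_le_log (ha.trans_le hab) hbC

/-- Builds on the given `AddCommGroup E`, so that `‖x‖` unfolds to `N x`. -/
abbrev normedAddCommGroupOfUltrametric {k E : Type*} [NontriviallyNormedField k]
    [AddCommGroup E] [Module k E] (N : E → ℝ) (hN0 : ∀ x : E, N x = 0 ↔ x = 0)
    (hNsmul : ∀ (c : k) (x : E), N (c • x) = ‖c‖ * N x)
    (hNultra : ∀ x y : E, N (x + y) ≤ max (N x) (N y)) : NormedAddCommGroup E :=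
  have hneg x : N (-x) = N x := by simpa using hNsmul (-1) x
  have hnonneg x : 0 ≤ N x := by simpa [(hN0 0).2 rfl, hneg] using hNultra x (-x)
  AddGroupNorm.toNormedAddCommGroup
    { toFun := N
      map_zero' := (hN0 0).2 rfl
      add_le' := fun x y => (hNultra x y).trans (max_le_add_of_nonneg (hnonneg x) (hnonneg y))
      neg' := hneg
      eq_zero_of_map_eq_zero' := fun x => (hN0 x).1 }

theorem approximation_by_orthonormally_decomposable_norm_general
    {k E : Type*} [NontriviallyNormedField k] [CompleteSpace k] [IsAlgClosed k]
    [AddCommGroup E] [Module k E] [FiniteDimensional k E]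
    (N : E → ℝ)
    (hN0 : ∀ x : E, N x = 0 ↔ x = 0)
    (hNsmul : ∀ (c : k) (x : E), N (c • x) = ‖c‖ * N x)
    (hNultra : ∀ x y : E, N (x + y) ≤ max (N x) (N y))
    (α : ℝ) (hα0 : 0 < α) (hα1 : α < 1) :
    ∃ Nα : E → ℝ,
      (∃ (n : ℕ) (b : Module.Basis (Fin n) k E), ∀ x : E, Nα x = ⨆ i, ‖b.repr x i‖) ∧
      (∀ x : E, N x ≤ Nα x ∧ Nα x ≤ α⁻¹ ^ 2 * N x) ∧
      (∀ x : E, x ≠ 0 → |Real.log (Nα x) - Real.log (N x)| ≤ -2 * Real.log α) := by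
  let _ := normedAddCommGroupOfUltrametric N hN0 hNsmul hNultra
  let _ : NormedSpace k E := { norm_smul_le := fun c x => (hNsmul c x).le }
  have : IsUltrametricDist E :=
    IsUltrametricDist.isUltrametricDist_of_forall_norm_add_le_max_norm hNultra
  obtain ⟨b, hb⟩ := exists_basis_norm_le_iSup_norm_repr_le (k := k) (E := E) hα0 hα1
  refine ⟨fun x => ⨆ i, ‖b.repr x i‖, ⟨_, b, fun _ => rfl⟩, hb, fun x hx => ?_⟩
  calc _ ≤ Real.log (α⁻¹ ^ 2) := abs_log_sub_log_le_log (norm_pos_iff.2 hx) (hb x).1 (hb x).2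
    _ = -2 * Real.log α := by rw [Real.log_pow, Real.log_inv]; push_cast; ring

/-- Let `(E, N)` be a finite-dimensional ultrametrically normed vector space
over a complete non-Archimedean algebraically closed valued field `k` with nontrivial
valuation.  For any `α ∈ (0,1)`, there exists a norm `Nα` on `E` admitting an orthonormal
basis such that `N x ≤ Nα x ≤ α⁻² · N x` for all `x`; in particular the distance
`d(Nα, N) = sup_{x ≠ 0} |ln (Nα x) - ln (N x)|` is at most `-2 ln α`. -/
theorem approximation_by_orthonormally_decomposable_norm
    {k E : Type*} [NontriviallyNormedField k] [CompleteSpace k] [IsAlgClosed k]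
    (hk : ∀ x y : k, ‖x + y‖ ≤ max ‖x‖ ‖y‖)
    [AddCommGroup E] [Module k E] [FiniteDimensional k E]
    (N : E → ℝ)
    (hN0 : ∀ x : E, N x = 0 ↔ x = 0)
    (hNsmul : ∀ (c : k) (x : E), N (c • x) = ‖c‖ * N x)
    (hNultra : ∀ x y : E, N (x + y) ≤ max (N x) (N y))
    (α : ℝ) (hα0 : 0 < α) (hα1 : α < 1) :
    ∃ Nα : E → ℝ,
      (∃ (n : ℕ) (b : Module.Basis (Fin n) k E), ∀ x : E, Nα x = ⨆ i, ‖b.repr x i‖) ∧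
      (∀ x : E, N x ≤ Nα x ∧ Nα x ≤ α⁻¹ ^ 2 * N x) ∧
      (∀ x : E, x ≠ 0 → |Real.log (Nα x) - Real.log (N x)| ≤ -2 * Real.log α) :=
  approximation_by_orthonormally_decomposable_norm_general N hN0 hNsmul hNultra α hα0 hα1
end

section
/- Let k be a complete non-Archimedean valued field with valuation ring k°, and let (E, ‖·‖) be a finite-dimensional normed k-vector space admitting an orthonormal basis (e_j)_{j=0}^r. Then any element s_0 ∈ E with ‖s_0‖ = 1 can be completed to an orthonormal basis (s_0, s_1, …, s_r) of (E, ‖·‖). -/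
/-! In the coordinates of `e` the norm `N` is the sup norm of `k^{r+1}`, which is ultrametric.
Let `λ` be the coordinates of `s₀`, so `‖λ‖ = 1` and `‖λ_{j₀}‖ = 1` for some `j₀`. The map
`x ↦ x + x_{j₀} • (λ - δ_{j₀})` sends `δ_{j₀}` to `λ`; it does not increase the sup norm since
`‖λ - δ_{j₀}‖ ≤ 1`, and it multiplies the `j₀`-th coordinate by the unit `λ_{j₀}`, which gives
the reverse inequality. So it is an isometry, and transporting `e` along it puts `s₀` in place
of `e_{j₀}`; swapping the indices `j₀` and `0` finishes the proof. -/

open Module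

theorem Pi.norm_eq_ciSup {ι G : Type*} [Fintype ι] [SeminormedAddGroup G] (f : ι → G) :
    ‖f‖ = ⨆ i, ‖f i‖ :=
  le_antisymm ((pi_norm_le_iff_of_nonneg (Real.iSup_nonneg fun _ => norm_nonneg _)).2
      fun i => le_ciSup (f := fun i => ‖f i‖) (Set.finite_range _).bddAbove i)
    (Real.iSup_le (norm_le_pi_norm f) (norm_nonneg f))

theorem Pi.exists_norm_apply_eq_norm {ι G : Type*} [Fintype ι] [Nonempty ι]
    [SeminormedAddGroup G] (f : ι → G) : ∃ i, ‖f i‖ = ‖f‖ :=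
  (Pi.norm_eq_ciSup f).symm ▸ exists_eq_ciSup_of_finite

theorem Module.Basis.norm_equivFun_reindex {ι ι' R M : Type*} [Fintype ι] [Fintype ι']
    [SeminormedRing R] [AddCommMonoid M] [Module R M] (b : Basis ι R M) (σ : ι ≃ ι') (x : M) :
    ‖(b.reindex σ).equivFun x‖ = ‖b.equivFun x‖ := by
  simp only [Pi.norm_eq_ciSup, equivFun_apply, repr_reindex_apply]
  exact congrArg sSup (σ.symm.surjective.range_comp fun j => ‖b.repr x j‖)

section Ultrametric

variable {k V : Type*} [NormedField k]

theorem LinearMap.transvection.norm_apply [SeminormedAddCommGroup V] [NormedSpace k V]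
    [IsUltrametricDist V] {f : Dual k V} {w : V} (hf : ∀ x, ‖f x‖ ≤ ‖x‖) (hw : ‖w‖ ≤ 1)
    (hfw : ‖1 + f w‖ = 1) (x : V) : ‖transvection f w x‖ = ‖x‖ := by
  have hsmul : ∀ y, ‖f y • w‖ ≤ ‖f y‖ := fun y =>
    (norm_smul_le _ _).trans (mul_le_of_le_one_right (norm_nonneg _) hw)
  have hfx : ‖f x‖ ≤ ‖transvection f w x‖ :=
    calc ‖f x‖ = ‖f (transvection f w x)‖ := by
          rw [transvection.apply, map_add, map_smul, smul_eq_mul, ← mul_one_add, norm_mul, hfw,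
            mul_one]
      _ ≤ _ := hf _
  refine le_antisymm ?_ ?_
  · exact (IsUltrametricDist.norm_add_le_max _ _).trans (max_le le_rfl ((hsmul x).trans (hf x)))
  · calc ‖x‖ = ‖transvection f w x + -(f x • w)‖ := by
          rw [transvection.apply, add_neg_cancel_right]
      _ ≤ _ := IsUltrametricDist.norm_add_le_max _ _
      _ ≤ _ := max_le le_rfl ((norm_neg _).trans_le ((hsmul x).trans hfx))

noncomputable def LinearIsometryEquiv.transvection [NormedAddCommGroup V] [NormedSpace k V]
    [IsUltrametricDist V] [FiniteDimensional k V] {f : Dual k V} {w : V}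
    (hf : ∀ x, ‖f x‖ ≤ ‖x‖) (hw : ‖w‖ ≤ 1) (hfw : ‖1 + f w‖ = 1) : V ≃ₗᵢ[k] V :=
  { LinearEquiv.ofInjectiveEndo (LinearMap.transvection f w) <|
      (injective_iff_map_eq_zero _).2 fun x hx => norm_eq_zero.1 <| by
        rw [← LinearMap.transvection.norm_apply hf hw hfw x, hx, norm_zero] with
    norm_map' := LinearMap.transvection.norm_apply hf hw hfw }

@[simp]
theorem LinearIsometryEquiv.transvection_apply [NormedAddCommGroup V] [NormedSpace k V]
    [IsUltrametricDist V] [FiniteDimensional k V] {f : Dual k V} {w : V}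
    (hf : ∀ x, ‖f x‖ ≤ ‖x‖) (hw : ‖w‖ ≤ 1) (hfw : ‖1 + f w‖ = 1) (x : V) :
    transvection hf hw hfw x = x + f x • w :=
  rfl

variable [IsUltrametricDist k] {ι : Type*} [Fintype ι]

theorem exists_linearIsometryEquiv_apply_single_eq [DecidableEq ι] {v : ι → k} (hv : ‖v‖ ≤ 1)
    {i : ι} (hvi : ‖v i‖ = 1) : ∃ T : (ι → k) ≃ₗᵢ[k] (ι → k), T (Pi.single i 1) = v := by
  have hw : ‖v - Pi.single i 1‖ ≤ 1 := by
    rw [sub_eq_add_neg]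
    refine (IsUltrametricDist.norm_add_le_max _ _).trans (max_le hv ?_)
    rw [norm_neg, Pi.norm_single, norm_one]
  have hf : ∀ x : ι → k, ‖LinearMap.proj (R := k) i x‖ ≤ ‖x‖ := (norm_le_pi_norm · i)
  refine ⟨LinearIsometryEquiv.transvection hf hw (by simpa using hvi), ?_⟩
  simp

namespace Module.Basis

variable {E : Type*} [AddCommGroup E] [Module k E]

theorem exists_apply_eq_and_norm_equivFun_eq (e : Basis ι k E) {s : E}
    (hs : ‖e.equivFun s‖ ≤ 1) {i : ι} (hsi : ‖e.equivFun s i‖ = 1) :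
    ∃ b : Basis ι k E, b i = s ∧ ∀ x, ‖b.equivFun x‖ = ‖e.equivFun x‖ := by
  classical
  obtain ⟨T, hT⟩ := exists_linearIsometryEquiv_apply_single_eq hs hsi
  refine ⟨.ofEquivFun (e.equivFun.trans T.symm.toLinearEquiv), ?_, fun x => ?_⟩
  · simp [hT]
  · rw [equivFun_ofEquivFun]
    exact T.symm.norm_map _

end Module.Basis

end Ultrametric

theorem extend_unit_vector_to_orthonormal_basis_general
    {k E : Type*} [NormedField k]
    (hk : ∀ x y : k, ‖x + y‖ ≤ max ‖x‖ ‖y‖)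
    [AddCommGroup E] [Module k E]
    (N : E → ℝ) (r : ℕ) (e : Module.Basis (Fin (r + 1)) k E)
    (he : ∀ x : E, N x = ⨆ j, ‖e.repr x j‖)
    (s₀ : E) (hs₀ : N s₀ = 1) :
    ∃ b : Module.Basis (Fin (r + 1)) k E, b 0 = s₀ ∧ ∀ x : E, N x = ⨆ j, ‖b.repr x j‖ := by
  have : IsUltrametricDist k := .isUltrametricDist_of_forall_norm_add_le_max_norm hk
  have hN : ∀ x, N x = ‖e.equivFun x‖ := fun x => (he x).trans (Pi.norm_eq_ciSup _).symm
  obtain ⟨j₀, hj₀⟩ := Pi.exists_norm_apply_eq_norm (e.equivFun s₀)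
  have hs : ‖e.equivFun s₀‖ = 1 := (hN s₀).symm.trans hs₀
  obtain ⟨b, hb₀, hb⟩ := e.exists_apply_eq_and_norm_equivFun_eq hs.le (hj₀.trans hs)
  refine ⟨b.reindex (Equiv.swap j₀ 0), by simp [hb₀], fun x => ?_⟩
  rw [hN, ← hb, ← b.norm_equivFun_reindex (Equiv.swap j₀ 0)]
  exact Pi.norm_eq_ciSup _

/-- Let `k` be a complete non-Archimedean valued field and `(E, N)` a
finite-dimensional normed `k`-vector space admitting an orthonormal basis `(e_j)_{j=0}^r`
(i.e. `N (Σ λ_j e_j) = max_j ‖λ_j‖`).  Then any element `s₀` with `N s₀ = 1` can be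
completed to an orthonormal basis `(s₀, s₁, …, s_r)` of `(E, N)`. -/
theorem extend_unit_vector_to_orthonormal_basis
    {k E : Type*} [NormedField k] [CompleteSpace k]
    (hk : ∀ x y : k, ‖x + y‖ ≤ max ‖x‖ ‖y‖)
    [AddCommGroup E] [Module k E]
    (N : E → ℝ) (r : ℕ) (e : Module.Basis (Fin (r + 1)) k E)
    (he : ∀ x : E, N x = ⨆ j, ‖e.repr x j‖)
    (s₀ : E) (hs₀ : N s₀ = 1) :
    ∃ b : Module.Basis (Fin (r + 1)) k E, b 0 = s₀ ∧ ∀ x : E, N x = ⨆ j, ‖b.repr x j‖ :=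
  extend_unit_vector_to_orthonormal_basis_general hk N r e he s₀ hs₀
end

section
/- Let k be a complete non-Archimedean valued field, (E, ‖·‖) a finite-dimensional normed k-vector space admitting an orthonormal basis, and F ⊆ E a subspace. Then the quotient norm on E/F admits an orthonormal basis. -/
/-!
Transport the problem along the coordinate isomorphism `E ≃ kⁿ` given by the orthonormal basis,
and prove more generally that for every surjective linear map `π : kⁿ → W`, the infimum of the
sup norm over the fibres of `π` is the sup norm of the coordinates in some basis of `W`.
If `π` is injective, the image of the standard basis works. Otherwise normalize a nonzero vector
of `ker π` by a coordinate of maximal absolute value, getting `u ∈ ker π` with `u j = 1` and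
`‖u‖ = 1`. Clearing coordinate `j` with `u` and then dropping it is a linear map `kⁿ⁺¹ → kⁿ`
which, by the ultrametric inequality, does not increase norms, and inserting a zero coordinate is
an isometric section of it. Since `π` factors through it, the fibre infima of `π` are those of a
surjection `kⁿ → W`, and we conclude by induction on `n`.
-/

open Function Module

theorem isGLB_image_preimage_singleton_iff {V V' W α : Type*} [Preorder α]
    {N : V → α} {N' : V' → α} {π : V → W} {π' : V' → W} {ρ : V → V'} {σ : V' → V}
    (hρ : ∀ x, π' (ρ x) = π x) (hσ : ∀ z, π (σ z) = π' z)
    (hρN : ∀ x, N' (ρ x) ≤ N x) (hσN : ∀ z, N (σ z) ≤ N' z) (w : W) (c : α) :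
    IsGLB (N '' (π ⁻¹' {w})) c ↔ IsGLB (N' '' (π' ⁻¹' {w})) c := by
  suffices lowerBounds (N '' (π ⁻¹' {w})) = lowerBounds (N' '' (π' ⁻¹' {w})) by
    simp only [IsGLB, this]
  ext c
  simp only [mem_lowerBounds, Set.forall_mem_image, Set.mem_preimage, Set.mem_singleton_iff]
  constructor
  · intro h z hz
    exact (h (by rw [hσ, hz])).trans (hσN z)
  · intro h x hx
    exact (h (by rw [hρ, hx])).trans (hρN x)

theorem pi_norm_eq_iSup_norm {ι E : Type*} [Fintype ι] [SeminormedAddCommGroup E] (x : ι → E) :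
    ‖x‖ = ⨆ i, ‖x i‖ := by
  rw [← PiLp.norm_toLp, PiLp.norm_eq_ciSup]

namespace Fin

variable {R : Type*} {n : ℕ}

section InsertZero

variable [Semiring R]

variable (R) in
def insertNthZeroₗ {M : Type*} [AddCommMonoid M] [Module R M] (j : Fin (n + 1)) :
    (Fin n → M) →ₗ[R] (Fin (n + 1) → M) where
  toFun z := j.insertNth 0 z
  map_add' z z' := by rw [← insertNth_add, add_zero]
  map_smul' c z := insertNth_eq_iff.2 ⟨by simp, by ext; simp [removeNth]⟩

theorem norm_insertNthZeroₗ {E : Type*} [SeminormedAddCommGroup E] [Module R E]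
    (j : Fin (n + 1)) (z : Fin n → E) : ‖insertNthZeroₗ R j z‖ = ‖z‖ := by
  refine le_antisymm ((pi_norm_le_iff_of_nonneg (norm_nonneg z)).2 fun i => ?_) ?_
  · induction i using j.succAboveCases <;> simp [insertNthZeroₗ, norm_le_pi_norm]
  · simpa [insertNthZeroₗ] using pi_norm_comp_le (insertNthZeroₗ R j z) j.succAbove

end InsertZero

section Eliminate

variable [CommRing R]

def eliminate (j : Fin (n + 1)) (u : Fin (n + 1) → R) : (Fin (n + 1) → R) →ₗ[R] (Fin n → R) :=
  LinearMap.funLeft R R j.succAbove ∘ₗ (LinearMap.id - (LinearMap.proj j).smulRight u)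

theorem eliminate_apply (j : Fin (n + 1)) (u x : Fin (n + 1) → R) (i : Fin n) :
    eliminate j u x i = x (j.succAbove i) - x j * u (j.succAbove i) :=
  rfl

theorem insertNthZeroₗ_eliminate {j : Fin (n + 1)} {u : Fin (n + 1) → R} (hu : u j = 1)
    (x : Fin (n + 1) → R) : insertNthZeroₗ R j (eliminate j u x) = x - x j • u := by
  ext i
  induction i using j.succAboveCases <;> simp [eliminate_apply, insertNthZeroₗ, hu]

theorem norm_eliminate_le {k : Type*} [NormedField k] [IsUltrametricDist k] {j : Fin (n + 1)}
    {u : Fin (n + 1) → k} (hu : ‖u‖ ≤ 1) (x : Fin (n + 1) → k) : ‖eliminate j u x‖ ≤ ‖x‖ := by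
  have hsub : ‖x - x j • u‖ ≤ ‖x‖ := by
    rw [sub_eq_add_neg]
    refine (IsUltrametricDist.norm_add_le_max x _).trans (max_le le_rfl ?_)
    calc ‖-(x j • u)‖ = ‖x j‖ * ‖u‖ := by rw [norm_neg, norm_smul]
      _ ≤ ‖x j‖ := mul_le_of_le_one_right (norm_nonneg _) hu
      _ ≤ ‖x‖ := norm_le_pi_norm x j
  exact (pi_norm_comp_le (x - x j • u) j.succAbove).trans hsub

end Eliminate

end Fin

theorem Submodule.exists_mem_norm_eq_one_apply_eq_one {k ι : Type*} [NormedField k] [Fintype ι]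
    {p : Submodule k (ι → k)} (hp : p ≠ ⊥) : ∃ u ∈ p, ∃ j, u j = 1 ∧ ‖u‖ = 1 := by
  obtain ⟨v, hvp, hv0⟩ := (Submodule.ne_bot_iff p).mp hp
  have : Nonempty ι := not_isEmpty_iff.mp fun _ => hv0 (Subsingleton.elim v 0)
  obtain ⟨⟨j, hj : ‖v j‖ = ‖v‖⟩, -⟩ := IsGreatest.pi_norm v
  have hvj : ‖v j‖ ≠ 0 := hj ▸ norm_ne_zero_iff.mpr hv0
  refine ⟨(v j)⁻¹ • v, p.smul_mem _ hvp, j, inv_mul_cancel₀ (norm_ne_zero_iff.mp hvj), ?_⟩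
  rw [norm_smul, norm_inv, ← hj, inv_mul_cancel₀ hvj]

section FibreInfimum

variable {k W : Type*} [NormedField k] [AddCommGroup W] [Module k W]

theorem exists_basis_isGLB_norm_preimage_of_bijective {n : ℕ} {π : (Fin n → k) →ₗ[k] W}
    (hπ : Bijective π) :
    ∃ b : Basis (Fin n) k W, ∀ w, IsGLB (norm '' (π ⁻¹' {w})) (⨆ j, ‖b.repr w j‖) := by
  let e := LinearEquiv.ofBijective π hπ
  refine ⟨(Pi.basisFun k (Fin n)).map e, fun w => ?_⟩
  have hfibre : π ⁻¹' {w} = {e.symm w} := by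
    ext x
    simp [eq_comm, LinearEquiv.eq_symm_apply, e]
  simp [hfibre, ← pi_norm_eq_iSup_norm]

theorem exists_basis_isGLB_norm_preimage [IsUltrametricDist k] {n : ℕ}
    (π : (Fin n → k) →ₗ[k] W) (hπ : Surjective π) :
    ∃ (m : ℕ) (b : Basis (Fin m) k W), ∀ w, IsGLB (norm '' (π ⁻¹' {w})) (⨆ j, ‖b.repr w j‖) := by
  induction n with
  | zero =>
    exact ⟨0, exists_basis_isGLB_norm_preimage_of_bijective ⟨injective_of_subsingleton _, hπ⟩⟩
  | succ n ih =>
    by_cases hker : LinearMap.ker π = ⊥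
    · exact ⟨_, exists_basis_isGLB_norm_preimage_of_bijective ⟨LinearMap.ker_eq_bot.mp hker, hπ⟩⟩
    obtain ⟨u, hu, j, huj, hu1⟩ := Submodule.exists_mem_norm_eq_one_apply_eq_one hker
    set π' := π ∘ₗ Fin.insertNthZeroₗ k j
    have hfactor : ∀ x, π' (Fin.eliminate j u x) = π x := by
      intro x
      rw [LinearMap.comp_apply, Fin.insertNthZeroₗ_eliminate huj, map_sub, map_smul,
        LinearMap.mem_ker.mp hu, smul_zero, sub_zero]
    have hπ' : Surjective π' :=
      Surjective.of_comp fun w => (hπ w).imp fun x hx => (hfactor x).trans hx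
    obtain ⟨m, b, hb⟩ := ih π' hπ'
    refine ⟨m, b, fun w => (isGLB_image_preimage_singleton_iff hfactor (fun _ => rfl)
      (Fin.norm_eliminate_le hu1.le) (fun z => (Fin.norm_insertNthZeroₗ j z).le) w _).mpr (hb w)⟩

end FibreInfimum

theorem quotient_norm_orthonormally_decomposable_general
    {k E : Type*} [NormedField k]
    (hk : ∀ x y : k, ‖x + y‖ ≤ max ‖x‖ ‖y‖)
    [AddCommGroup E] [Module k E]
    (N : E → ℝ)
    (hN : ∃ (n : ℕ) (e : Module.Basis (Fin n) k E), ∀ x : E, N x = ⨆ j, ‖e.repr x j‖)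
    (F : Submodule k E)
    (Nq : E ⧸ F → ℝ)
    (hNq : ∀ y : E ⧸ F,
      IsGLB {c : ℝ | ∃ x : E, Submodule.Quotient.mk x = y ∧ c = N x} (Nq y)) :
    ∃ (m : ℕ) (b : Module.Basis (Fin m) k (E ⧸ F)), ∀ y : E ⧸ F, Nq y = ⨆ j, ‖b.repr y j‖ := by
  have : IsUltrametricDist k := .isUltrametricDist_of_forall_norm_add_le_max_norm hk
  obtain ⟨n, e, hN⟩ := hN
  have hNe : ∀ x, N x = ‖e.equivFun x‖ := fun x => by
    rw [hN, pi_norm_eq_iSup_norm, e.equivFun_apply]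
  obtain ⟨m, b, hb⟩ := exists_basis_isGLB_norm_preimage (F.mkQ ∘ₗ e.equivFun.symm.toLinearMap)
    (F.mkQ_surjective.comp e.equivFun.symm.surjective)
  refine ⟨m, b, fun y => (hNq y).unique ?_⟩
  have hfibre : {c | ∃ x, Submodule.Quotient.mk x = y ∧ c = N x} = N '' (F.mkQ ⁻¹' {y}) := by
    ext c
    simp [eq_comm]
  rw [hfibre, isGLB_image_preimage_singleton_iff (ρ := e.equivFun) (σ := e.equivFun.symm)
    (fun x => by simp) (fun _ => rfl) (fun x => (hNe x).ge)
    (fun z => by rw [hNe, LinearEquiv.apply_symm_apply])]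
  exact hb y

/-- Let `k` be a complete non-Archimedean valued field, `(E, N)` a
finite-dimensional normed `k`-vector space admitting an orthonormal basis, and `F ⊆ E` a
subspace.  Then the quotient norm on `E ⧸ F` admits an orthonormal basis. -/
theorem quotient_norm_orthonormally_decomposable
    {k E : Type*} [NormedField k] [CompleteSpace k]
    (hk : ∀ x y : k, ‖x + y‖ ≤ max ‖x‖ ‖y‖)
    [AddCommGroup E] [Module k E] [FiniteDimensional k E]
    (N : E → ℝ)
    (hN : ∃ (n : ℕ) (e : Module.Basis (Fin n) k E), ∀ x : E, N x = ⨆ j, ‖e.repr x j‖)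
    (F : Submodule k E)
    (Nq : E ⧸ F → ℝ)
    (hNq : ∀ y : E ⧸ F,
      IsGLB {c : ℝ | ∃ x : E, Submodule.Quotient.mk x = y ∧ c = N x} (Nq y)) :
    ∃ (m : ℕ) (b : Module.Basis (Fin m) k (E ⧸ F)), ∀ y : E ⧸ F, Nq y = ⨆ j, ‖b.repr y j‖ :=
  quotient_norm_orthonormally_decomposable_general hk N hN F Nq hNq
end

section
/- Let X be a projective scheme over a complete valued field k and L a very ample invertible O_X-module with continuous metric φ. Let ‖·‖ be any norm on H⁰(X, L^{⊗n}), and for a > 0 define ‖s‖_a := max{‖s‖_φ, a‖s‖} where ‖s‖_φ is the sup seminorm. Let φ_a be the quotient metric induced by ‖·‖_a. Then |·|_{φ^{(1)}}(x) ≤ |·|_{φ_a}(x) for all x ∈ X^an, and there exists a_0 > 0 such that φ_a = φ^{(1)} for all 0 < a ≤ a_0. -/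
/-! The sup seminorm `‖·‖_φ` dominates every pointwise seminorm `|·|(x) φ(x)^n`, so adding an
element of its kernel to a section changes neither its values nor `‖s‖_φ`. On a complement of
the kernel `‖·‖_φ` is a norm, hence dominates `N` up to a constant `C` by finite-dimensionality.
For `a ≤ C⁻¹`, every section can thus be replaced by one on which `max (‖·‖_φ, a N) = ‖·‖_φ`
without changing the ratios whose infimum is the quotient metric. -/

namespace Seminorm

open Set

variable {k E : Type*} [NontriviallyNormedField k] [AddCommGroup E] [Module k E]

def ker (p : Seminorm k E) : Submodule k E where
  carrier := {x | p x = 0}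
  add_mem' {x y} hx hy := le_antisymm ((map_add_le_add p x y).trans_eq (by rw [hx, hy, add_zero]))
    (apply_nonneg p _)
  zero_mem' := map_zero p
  smul_mem' c x hx := by simp only [mem_ofPred_eq, map_smul_eq_mul] at hx ⊢; rw [hx, mul_zero]

@[simp]
theorem mem_ker {p : Seminorm k E} {x : E} : x ∈ p.ker ↔ p x = 0 := Iff.rfl

theorem ker_anti : Antitone (ker : Seminorm k E → Submodule k E) := fun _ _ h x hx =>
  le_antisymm ((h x).trans_eq (mem_ker.mp hx)) (apply_nonneg _ x)

theorem map_eq_of_sub_mem_ker {p : Seminorm k E} {x y : E} (h : x - y ∈ p.ker) : p y = p x := by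
  have := p.norm_sub_map_le_sub x y
  rw [mem_ker.mp h, norm_le_zero_iff, sub_eq_zero] at this
  exact this.symm

def ofIsLUB {ι : Type*} (e : ι → Seminorm k E) (p : E → ℝ)
    (hp : ∀ x, IsLUB (range fun i => e i x) (p x)) : Seminorm k E :=
  Seminorm.of p
    (fun x y => (hp (x + y)).2 <| by
      rintro _ ⟨i, rfl⟩
      exact (map_add_le_add (e i) x y).trans (add_le_add ((hp x).1 ⟨i, rfl⟩) ((hp y).1 ⟨i, rfl⟩)))
    (fun c x => (hp (c • x)).unique <| by
      simpa only [map_smul_eq_mul, ← range_comp, Function.comp_def] using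
        (hp x).mul_left (norm_nonneg c))

theorem le_ofIsLUB {ι : Type*} (e : ι → Seminorm k E) (p : E → ℝ)
    (hp : ∀ x, IsLUB (range fun i => e i x) (p x)) (i : ι) : e i ≤ ofIsLUB e p hp :=
  fun x => (hp x).1 ⟨i, rfl⟩

variable [CompleteSpace k] [FiniteDimensional k E]

/-- No local compactness of `k` is needed: the constant comes from the continuity of the
coordinate functionals of a basis. -/
theorem exists_le_mul_of_definite {p : Seminorm k E} (hp : ∀ x, p x = 0 → x = 0)
    (q : Seminorm k E) : ∃ C, 0 < C ∧ ∀ x, q x ≤ C * p x := by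
  let : NormedAddCommGroup E := AddGroupNorm.toNormedAddCommGroup
    { p.toAddGroupSeminorm with eq_zero_of_map_eq_zero' := hp }
  let : NormedSpace k E := ⟨fun c x => (map_smul_eq_mul p c x).le⟩
  let b := Module.finBasis k E
  let L : E →L[k] (Fin _ → k) := b.equivFunL.toContinuousLinearMap
  set M := ∑ i, q (b i)
  have hM : 0 ≤ M := Finset.sum_nonneg fun i _ => apply_nonneg q _
  refine ⟨‖L‖ * M + 1, by positivity, fun x => ?_⟩
  calc q x = q (∑ i, b.repr x i • b i) := by rw [b.sum_repr]
    _ ≤ ∑ i, ‖b.repr x i‖ * q (b i) := by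
        refine (Finset.le_sum_of_subadditive q (map_zero q).le (map_add_le_add q) _ _).trans ?_
        simp only [map_smul_eq_mul, le_refl]
    _ ≤ ∑ i, ‖L x‖ * q (b i) := by
        gcongr with i
        exact norm_le_pi_norm (L x) i
    _ = ‖L x‖ * M := (Finset.mul_sum _ _ _).symm
    _ ≤ ‖L‖ * p x * M := by gcongr; exact L.le_opNorm x
    _ ≤ (‖L‖ * M + 1) * p x := by nlinarith [apply_nonneg p x]

theorem exists_bound_mod_ker (p q : Seminorm k E) :
    ∃ C, 0 < C ∧ ∀ x, ∃ y, x - y ∈ p.ker ∧ q y ≤ C * p y := by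
  obtain ⟨W, hW⟩ := p.ker.exists_isCompl
  have hdef : ∀ w : W, p.comp W.subtype w = 0 → w = 0 := fun w hw =>
    Subtype.ext (Submodule.disjoint_def.mp hW.disjoint _ hw w.2)
  obtain ⟨C, hC, hbound⟩ := exists_le_mul_of_definite hdef (q.comp W.subtype)
  refine ⟨C, hC, fun x => ?_⟩
  obtain ⟨t, w, ht, hw, rfl⟩ := Submodule.codisjoint_iff_exists_add_eq.mp hW.codisjoint x
  exact ⟨w, by simpa using ht, hbound ⟨w, hw⟩⟩

end Seminorm

theorem quotientMetric_le_of_forall_exists {ι : Type*} {E F G : ι → ℝ} {e u v : ℝ}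
    (hu : IsGLB {r | ∃ s, E s ≠ 0 ∧ r = (F s / E s) ^ e} u)
    (hv : IsGLB {r | ∃ s, E s ≠ 0 ∧ r = (G s / E s) ^ e} v)
    (he : 0 ≤ e) (hE : ∀ s, 0 ≤ E s) (hF : ∀ s, 0 ≤ F s)
    (h : ∀ s, E s ≠ 0 → ∃ t, E t ≠ 0 ∧ F t / E t ≤ G s / E s) : u ≤ v :=
  hv.2 <| by
    rintro _ ⟨s, hs, rfl⟩
    obtain ⟨t, ht, hts⟩ := h s hs
    exact (hu.1 ⟨t, ht, rfl⟩).trans (Real.rpow_le_rpow (div_nonneg (hF t) (hE t)) hts he)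

/-- `X` stands for the analytic points, `Hn` for `H⁰(X, L^{⊗n})`, `Ev s x` for `|s|(x)` measured
against a fixed local frame, `supφ` for `‖·‖_φ`, `N` for `‖·‖`, and `ψ`, `φa a` for the quotient
metrics `φ⁽¹⁾`, `φ_a`. -/
theorem quotient_metric_of_perturbed_norm_general
    {k : Type*} [NontriviallyNormedField k] [CompleteSpace k]
    (X : Type*)
    (Hn : Type*) [AddCommGroup Hn] [Module k Hn] [FiniteDimensional k Hn]
    (n : ℕ)
    (Ev : Hn → X → ℝ)
    (hEsmul : ∀ (c : k) (s : Hn) (x : X), Ev (c • s) x = ‖c‖ * Ev s x)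
    (hEadd : ∀ (s s' : Hn) (x : X), Ev (s + s') x ≤ Ev s x + Ev s' x)
    (φ : X → ℝ) (hφ : ∀ x, 0 < φ x)
    (supφ : Hn → ℝ)
    (hsup : ∀ s : Hn, IsLUB (Set.range fun x => Ev s x * φ x ^ n) (supφ s))
    (N : Hn → ℝ)
    (hNsmul : ∀ (c : k) (s : Hn), N (c • s) = ‖c‖ * N s)
    (hNadd : ∀ s s' : Hn, N (s + s') ≤ N s + N s')
    (ψ : X → ℝ)
    (hψ : ∀ x : X, IsGLB
      {r : ℝ | ∃ s : Hn, Ev s x ≠ 0 ∧ r = (supφ s / Ev s x) ^ ((n : ℝ)⁻¹)} (ψ x))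
    (φa : ℝ → X → ℝ)
    (hφa : ∀ a : ℝ, 0 < a → ∀ x : X, IsGLB
      {r : ℝ | ∃ s : Hn, Ev s x ≠ 0 ∧
        r = (max (supφ s) (a * N s) / Ev s x) ^ ((n : ℝ)⁻¹)} (φa a x)) :
    (∀ a : ℝ, 0 < a → ∀ x : X, ψ x ≤ φa a x) ∧
    ∃ a₀ : ℝ, 0 < a₀ ∧ ∀ a : ℝ, 0 < a → a ≤ a₀ → ∀ x : X, φa a x = ψ x := by
  let ev (x : X) : Seminorm k Hn := Seminorm.of (Ev · x) (hEadd · · x) (hEsmul · · x)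
  let evφ (x : X) : Seminorm k Hn := Seminorm.of (fun s => Ev s x * φ x ^ n)
    (fun s t => by
      rw [← add_mul]; exact mul_le_mul_of_nonneg_right (hEadd s t x) (pow_pos (hφ x) n).le)
    (fun c s => by rw [hEsmul, mul_assoc])
  let p := Seminorm.ofIsLUB evφ supφ hsup
  let q := Seminorm.of N hNadd hNsmul
  have hEv_ker (x : X) {s s' : Hn} (h : s - s' ∈ p.ker) : Ev s' x = Ev s x :=
    mul_right_cancel₀ (pow_ne_zero n (hφ x).ne')
      (Seminorm.map_eq_of_sub_mem_ker (Seminorm.ker_anti (Seminorm.le_ofIsLUB evφ supφ hsup x) h))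
  have hψ_le (a : ℝ) (ha : 0 < a) (x : X) : ψ x ≤ φa a x :=
    quotientMetric_le_of_forall_exists (hψ x) (hφa a ha x) (by positivity) (apply_nonneg (ev x))
      (apply_nonneg p) fun s hs =>
        ⟨s, hs, div_le_div_of_nonneg_right (le_max_left _ _) (apply_nonneg (ev x) s)⟩
  obtain ⟨C, hC, hbound⟩ := p.exists_bound_mod_ker q
  refine ⟨hψ_le, C⁻¹, inv_pos.mpr hC, fun a ha haC x => (hψ_le a ha x).antisymm' ?_⟩
  refine quotientMetric_le_of_forall_exists (hφa a ha x) (hψ x) (by positivity)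
    (apply_nonneg (ev x)) (fun s => (apply_nonneg p s).trans (le_max_left _ _)) fun s hs => ?_
  obtain ⟨s', hss', hqs'⟩ := hbound s
  have hmax : max (supφ s') (a * N s') = supφ s' := max_eq_left <|
    calc a * N s' ≤ C⁻¹ * N s' := by gcongr; exact apply_nonneg q s'
      _ ≤ C⁻¹ * (C * supφ s') := by gcongr; exact hqs'
      _ = supφ s' := inv_mul_cancel_left₀ hC.ne' _
  have hsup_eq : supφ s' = supφ s := Seminorm.map_eq_of_sub_mem_ker hss'
  refine ⟨s', hEv_ker x hss' ▸ hs, le_of_eq ?_⟩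
  rw [hmax, hsup_eq, hEv_ker x hss']

/-- Let `X` be a projective scheme over a complete valued field `k`, `L` a
very ample invertible `O_X`-module with continuous metric `φ`, and `N` any norm on
`H⁰(X, L^{⊗n})`.  For `a > 0` set `‖s‖_a := max {‖s‖_φ, a · N s}` and let `φ_a` be the
quotient metric induced by `‖·‖_a`.  Then `φ⁽¹⁾ ≤ φ_a` pointwise, and there exists `a₀ > 0`
such that `φ_a = φ⁽¹⁾` for all `0 < a ≤ a₀`.

Same abstraction as in Statement 9: `X` is the set of analytic points, `Hn = H⁰(X, L^{⊗n})`,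
`Ev s : X → ℝ` the coefficient function of the section `s` relative to fixed fibre
generators, `supφ s = ‖s‖_φ` the sup seminorm, and the quotient metrics are pointwise
infima with exponent `1/n`; `ψ` is the metric `φ⁽¹⁾` induced by the sup seminorm. -/
theorem quotient_metric_of_perturbed_norm
    {k : Type*} [NontriviallyNormedField k] [CompleteSpace k]
    (X : Type*) [Nonempty X]
    (Hn : Type*) [AddCommGroup Hn] [Module k Hn] [FiniteDimensional k Hn]
    (n : ℕ) (hn : 0 < n)
    (Ev : Hn → X → ℝ)
    (hEnn : ∀ (s : Hn) (x : X), 0 ≤ Ev s x)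
    (hEsmul : ∀ (c : k) (s : Hn) (x : X), Ev (c • s) x = ‖c‖ * Ev s x)
    (hEadd : ∀ (s s' : Hn) (x : X), Ev (s + s') x ≤ Ev s x + Ev s' x)
    (φ : X → ℝ) (hφ : ∀ x, 0 < φ x)
    (hva : ∀ x : X, ∃ s : Hn, Ev s x ≠ 0)
    (supφ : Hn → ℝ)
    (hsup : ∀ s : Hn, IsLUB (Set.range fun x => Ev s x * φ x ^ n) (supφ s))
    (N : Hn → ℝ)
    (hN0 : ∀ s : Hn, N s = 0 ↔ s = 0)
    (hNsmul : ∀ (c : k) (s : Hn), N (c • s) = ‖c‖ * N s)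
    (hNadd : ∀ s s' : Hn, N (s + s') ≤ N s + N s')
    (ψ : X → ℝ)
    (hψ : ∀ x : X, IsGLB
      {r : ℝ | ∃ s : Hn, Ev s x ≠ 0 ∧ r = (supφ s / Ev s x) ^ ((n : ℝ)⁻¹)} (ψ x))
    (φa : ℝ → X → ℝ)
    (hφa : ∀ a : ℝ, 0 < a → ∀ x : X, IsGLB
      {r : ℝ | ∃ s : Hn, Ev s x ≠ 0 ∧
        r = (max (supφ s) (a * N s) / Ev s x) ^ ((n : ℝ)⁻¹)} (φa a x)) :
    (∀ a : ℝ, 0 < a → ∀ x : X, ψ x ≤ φa a x) ∧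
    ∃ a₀ : ℝ, 0 < a₀ ∧ ∀ a : ℝ, 0 < a → a ≤ a₀ → ∀ x : X, φa a x = ψ x :=
  quotient_metric_of_perturbed_norm_general X Hn n Ev hEsmul hEadd φ hφ supφ hsup N hNsmul hNadd ψ
    hψ φa hφa
end

section
/- Let k be a complete non-Archimedean valued field with valuation ring o_v, X a projective k-scheme, and (𝒳, ℒ) a model of (X, L) where 𝒳 = Proj(A/I) for a polynomial ring A = o_v[T_0,…,T_N] and homogeneous ideal I. Then there exists a model (𝒳', ℒ') of (X, L) such that: 𝒳' → Spec(o_v) is finitely presented, 𝒳 is a closed subscheme of 𝒳', the special fibers of 𝒳 and 𝒳' coincide, and ℒ' restricts to ℒ on 𝒳. -/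
attribute [local instance] MvPolynomial.gradedAlgebra

attribute [local instance] MvPolynomial.algebraMvPolynomial

open MvPolynomial

private lemma exists_finset_span_eq {R M : Type*} [Semiring R] [AddCommMonoid M] [Module R M]
    {s : Set M} (h : (Submodule.span R s).FG) :
    ∃ t : Finset M, ↑t ⊆ s ∧ Submodule.span R (t : Set M) = Submodule.span R s := by
  classical
  obtain ⟨F, hF⟩ := h
  have hFs : ∀ y : F, (y : M) ∈ Submodule.span R s := fun y => hF ▸ Submodule.subset_span y.2
  choose T hTs hT using fun (y : F) => Submodule.mem_span_finite_of_mem_span (hFs y)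
  have hsub : ((F.attach.biUnion T : Finset M) : Set M) ⊆ s := by
    intro x hx
    simp only [Finset.coe_biUnion, Set.mem_iUnion] at hx
    obtain ⟨y, _, hy⟩ := hx
    exact hTs y hy
  refine ⟨F.attach.biUnion T, hsub, le_antisymm ?_ ?_⟩
  · exact Submodule.span_mono hsub
  · rw [← hF]
    refine Submodule.span_le.2 fun y hy => ?_
    have : y ∈ Submodule.span R ((T ⟨y, hy⟩ : Finset M) : Set M) := hT ⟨y, hy⟩
    exact Submodule.span_mono (by
      intro x hx
      simp only [Finset.coe_biUnion, Set.mem_iUnion]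
      exact ⟨⟨y, hy⟩, Finset.mem_attach _ _, hx⟩) this

/-- Let `o_v = R` be the valuation ring of a complete non-Archimedean
valued field, and `(𝒳, ℒ)` a model of `(X, L)` with `𝒳 = Proj (A ⧸ I)`, where
`A = R[T_0, …, T_N]` and `I` is a homogeneous ideal.  Then there is a model `(𝒳', ℒ')` of
`(X, L)` which is finitely presented, contains `𝒳` as a closed subscheme, has the same
special fiber, and whose sheaf restricts to `ℒ`.

Formalized through the algebraic data of the proof: the model is `Proj (A ⧸ I)`; the sheaf
`ℒ` is given by homogeneous elements `Hh j` (of degrees `dH j`) whose `D₊`-opens cover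
(`T_i^a ∈ Σ_j Hh j · A + I`) and transition functions `G i j = u i j / (Hh i · Hh j)^c` in
the homogeneous localizations, satisfying the cocycle condition modulo `I` (written with
numerators).  The conclusion produces a finitely generated homogeneous ideal `I' ⊆ I` with
`I'_S = I_S` (same generic fiber, i.e. `𝒳` closed in `𝒳'` with the same `X`),
`π(I') = π(I)` (same special fiber, `π` = reduction modulo the maximal ideal), and the
covering and cocycle conditions holding modulo `I'` (so the `G i j` define `ℒ'` with
`ℒ'|_𝒳 = ℒ`). -/
theorem exists_finitely_presented_model
    {R : Type*} [CommRing R] [IsDomain R] [ValuationRing R]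
    (N : ℕ)
    (I : Ideal (MvPolynomial (Fin (N + 1)) R))
    (hI : I.IsHomogeneous (MvPolynomial.homogeneousSubmodule (Fin (N + 1)) R))
    (e : ℕ) (Hh : Fin e → MvPolynomial (Fin (N + 1)) R) (dH : Fin e → ℕ)
    (hHhom : ∀ j, Hh j ∈ MvPolynomial.homogeneousSubmodule (Fin (N + 1)) R (dH j))
    (a : ℕ)
    (hcover : ∀ i : Fin (N + 1),
      (MvPolynomial.X i : MvPolynomial (Fin (N + 1)) R) ^ a ∈
        Ideal.span (Set.range Hh) ⊔ I)
    (c : ℕ) (u : Fin e → Fin e → MvPolynomial (Fin (N + 1)) R)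
    (huhom : ∀ i j, u i j ∈
      MvPolynomial.homogeneousSubmodule (Fin (N + 1)) R (c * (dH i + dH j)))
    (hdiag : ∀ i, u i i = (Hh i * Hh i) ^ c)
    (hcocycle : ∀ i j l, ∃ m : ℕ,
      (Hh i * Hh j * Hh l) ^ m * (u i j * u j l - u i l * Hh j ^ (2 * c)) ∈ I) :
    ∃ I' : Ideal (MvPolynomial (Fin (N + 1)) R),
      I'.IsHomogeneous (MvPolynomial.homogeneousSubmodule (Fin (N + 1)) R) ∧
      I'.FG ∧ I' ≤ I ∧
      (∀ f ∈ I, ∃ s : R, s ≠ 0 ∧ s • f ∈ I') ∧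
      Ideal.map (MvPolynomial.map (IsLocalRing.residue R)) I' =
        Ideal.map (MvPolynomial.map (IsLocalRing.residue R)) I ∧
      (∀ i : Fin (N + 1),
        (MvPolynomial.X i : MvPolynomial (Fin (N + 1)) R) ^ a ∈
          Ideal.span (Set.range Hh) ⊔ I') ∧
      (∀ i j l, ∃ m : ℕ,
        (Hh i * Hh j * Hh l) ^ m * (u i j * u j l - u i l * Hh j ^ (2 * c)) ∈ I') := by
  classical
  let K := FractionRing R
  let κ := IsLocalRing.ResidueField R
  let π : MvPolynomial (Fin (N + 1)) R →+* MvPolynomial (Fin (N + 1)) κ := MvPolynomial.map (IsLocalRing.residue R)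
  let φ : MvPolynomial (Fin (N + 1)) R →+* MvPolynomial (Fin (N + 1)) K := MvPolynomial.map (algebraMap R K)
  -- generators of the image of I in the residue field polynomial ring
  have hπmap : I.map π = Ideal.span (π '' I) := rfl
  have hπfg : (Ideal.span (π '' (I : Set (MvPolynomial (Fin (N + 1)) R)))).FG := by
    rw [← hπmap]; exact IsNoetherian.noetherian _
  obtain ⟨Tκ, hTκsub, hTκspan⟩ := exists_finset_span_eq hπfg
  choose gκ hgκI hgκ using fun (t : Tκ) => hTκsub t.2
  -- generators of the image of I in the fraction field polynomial ring
  have hφmap : I.map φ = Ideal.span (φ '' I) := rfl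
  have hφfg : (Ideal.span (φ '' (I : Set (MvPolynomial (Fin (N + 1)) R)))).FG := by
    rw [← hφmap]; exact IsNoetherian.noetherian _
  obtain ⟨TK, hTKsub, hTKspan⟩ := exists_finset_span_eq hφfg
  choose gK hgKI hgK using fun (t : TK) => hTKsub t.2
  have hTκspan' : Ideal.span (Tκ : Set (MvPolynomial (Fin (N + 1)) κ)) =
      Ideal.span (⇑π '' ↑I) := hTκspan
  have hTKspan' : Ideal.span (TK : Set (MvPolynomial (Fin (N + 1)) K)) =
      Ideal.span (⇑φ '' ↑I) := hTKspan
  have hdec : ∀ (g : MvPolynomial (Fin (N + 1)) R) (n : ℕ),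
      ((DirectSum.decompose (MvPolynomial.homogeneousSubmodule (Fin (N + 1)) R) g n :
        MvPolynomial (Fin (N + 1)) R)) = MvPolynomial.homogeneousComponent n g :=
    fun g n => MvPolynomial.decomposition.decompose'_apply g n
  -- covering witnesses
  choose y hy z hzI hyz using fun i => Submodule.mem_sup.mp (hcover i)
  -- cocycle witnesses
  choose m hm using hcocycle
  let w : Fin e × Fin e × Fin e → MvPolynomial (Fin (N + 1)) R := fun p =>
    (Hh p.1 * Hh p.2.1 * Hh p.2.2) ^ (m p.1 p.2.1 p.2.2) *
      (u p.1 p.2.1 * u p.2.1 p.2.2 - u p.1 p.2.2 * Hh p.2.1 ^ (2 * c))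
  -- the finite set of elements of I we keep
  let G : Finset (MvPolynomial (Fin (N + 1)) R) := Tκ.attach.image gκ ∪ TK.attach.image gK ∪
      Finset.univ.image z ∪ Finset.univ.image w
  have hGI : ∀ g ∈ G, g ∈ I := by
    intro g hg
    simp only [G, Finset.mem_union, Finset.mem_image] at hg
    rcases hg with ((⟨t, _, rfl⟩ | ⟨t, _, rfl⟩) | ⟨i, _, rfl⟩) | ⟨p, _, rfl⟩
    · exact hgκI t
    · exact hgKI t
    · exact hzI i
    · exact hm p.1 p.2.1 p.2.2
  -- the finitely generated homogeneous ideal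
  let B : Finset (MvPolynomial (Fin (N + 1)) R) := G.biUnion fun g =>
    (Finset.range (g.totalDegree + 1)).image fun n => MvPolynomial.homogeneousComponent n g
  refine ⟨Ideal.span (B : Set (MvPolynomial (Fin (N + 1)) R)), ?_, ⟨B, rfl⟩, ?_, ?_, ?_, ?_, ?_⟩
  · -- homogeneous
    refine Ideal.homogeneous_span _ _ fun x hx => ?_
    simp only [B, Finset.coe_biUnion, Set.mem_iUnion, Finset.coe_image, Set.mem_image,
      Finset.mem_coe, Finset.mem_range] at hx
    obtain ⟨g, _, n, _, rfl⟩ := hx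
    exact ⟨n, MvPolynomial.homogeneousComponent_mem n g⟩
  · -- I' ≤ I
    refine Ideal.span_le.2 fun x hx => ?_
    simp only [B, Finset.coe_biUnion, Set.mem_iUnion, Finset.coe_image, Set.mem_image,
      Finset.mem_coe, Finset.mem_range] at hx
    obtain ⟨g, hg, n, _, rfl⟩ := hx
    have := hI n (hGI g hg)
    rwa [hdec] at this
  all_goals
    have hGmem : ∀ g ∈ G, g ∈ Ideal.span (B : Set (MvPolynomial (Fin (N + 1)) R)) := by
      intro g hg
      have hsum := MvPolynomial.sum_homogeneousComponent g
      rw [← hsum]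
      refine Ideal.sum_mem _ fun n hn => Ideal.subset_span ?_
      simp only [B, Finset.coe_biUnion, Set.mem_iUnion, Finset.coe_image, Set.mem_image,
        Finset.mem_coe, Finset.mem_range]
      exact ⟨g, hg, n, Finset.mem_range.mp hn, rfl⟩
  · -- localization: ∀ f ∈ I, ∃ s ≠ 0, s • f ∈ I'
    intro f hf
    letI : Algebra (MvPolynomial (Fin (N + 1)) R) (MvPolynomial (Fin (N + 1)) K) := MvPolynomial.algebraMvPolynomial
    have halg : algebraMap (MvPolynomial (Fin (N + 1)) R) (MvPolynomial (Fin (N + 1)) K) = φ := rfl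
    have hle : I.map φ ≤ Ideal.map φ (Ideal.span (B : Set (MvPolynomial (Fin (N + 1)) R))) := by
      rw [hφmap, ← hTKspan']
      refine Ideal.span_le.2 fun t ht => ?_
      have h1 : φ (gK ⟨t, ht⟩) = t := hgK ⟨t, ht⟩
      rw [← h1]
      exact Ideal.mem_map_of_mem φ (hGmem _ (by
        simp only [G, Finset.mem_union, Finset.mem_image]
        exact Or.inl (Or.inl (Or.inr ⟨⟨t, ht⟩, Finset.mem_attach _ _, rfl⟩))))
    have hfK : φ f ∈ Ideal.map (algebraMap (MvPolynomial (Fin (N + 1)) R) (MvPolynomial (Fin (N + 1)) K))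
        (Ideal.span (B : Set (MvPolynomial (Fin (N + 1)) R))) := by
      rw [halg]; exact hle (Ideal.mem_map_of_mem φ hf)
    rw [IsLocalization.mem_map_algebraMap_iff
      ((nonZeroDivisors R).map (MvPolynomial.C (σ := Fin (N + 1))))] at hfK
    obtain ⟨⟨⟨g', hg'⟩, ⟨s', hs'⟩⟩, hEq⟩ := hfK
    obtain ⟨r, hr, rfl⟩ := hs'
    refine ⟨r, nonZeroDivisors.ne_zero hr, ?_⟩
    have hinj : Function.Injective φ :=
      MvPolynomial.map_injective _ (IsFractionRing.injective R K)
    have : φ (f * MvPolynomial.C r) = φ g' := by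
      simpa only [halg, map_mul, MvPolynomial.map_C] using hEq
    have hfg' : f * MvPolynomial.C r = g' := hinj this
    rw [MvPolynomial.smul_eq_C_mul, mul_comm, hfg']
    exact hg'
  · -- same special fiber
    refine le_antisymm (Ideal.map_mono ?_) ?_
    · refine Ideal.span_le.2 fun x hx => ?_
      simp only [B, Finset.coe_biUnion, Set.mem_iUnion, Finset.coe_image, Set.mem_image,
        Finset.mem_coe, Finset.mem_range] at hx
      obtain ⟨g, hg, n, _, rfl⟩ := hx
      have := hI n (hGI g hg)
      rwa [hdec] at this
    · rw [hπmap, ← hTκspan']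
      refine Ideal.span_le.2 fun t ht => ?_
      have h1 : π (gκ ⟨t, ht⟩) = t := hgκ ⟨t, ht⟩
      rw [← h1]
      exact Ideal.mem_map_of_mem π (hGmem _ (by
        simp only [G, Finset.mem_union, Finset.mem_image]
        exact Or.inl (Or.inl (Or.inl ⟨⟨t, ht⟩, Finset.mem_attach _ _, rfl⟩))))
  · -- covering
    intro i
    refine Submodule.mem_sup.mpr ⟨y i, hy i, z i, ?_, hyz i⟩
    exact hGmem _ (by
      simp only [G, Finset.mem_union, Finset.mem_image]
      exact Or.inl (Or.inr ⟨i, Finset.mem_univ _, rfl⟩))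
  · -- cocycle
    intro i j l
    refine ⟨m i j l, hGmem _ ?_⟩
    simp only [G, Finset.mem_union, Finset.mem_image]
    exact Or.inr ⟨(i, j, l), Finset.mem_univ _, rfl⟩
end
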